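/- arXiv:1806.07173 — 2 statements merged into one kernel-verified Lean document; each statement's English description precedes it below -/
import Mathlib

section
/- Let F be an invertible 2×2 matrix, the affine map x ↦ Fx + b mapping a reference edge F̂ (with unit normal n̂ and unit tangent t̂) to an edge with unit normal n and unit tangent t, where n = (det F / det F_F)·F⁻ᵀ n̂ and t = (1/det F_F)·F t̂ with det F_F the 1D edge Jacobian determinant. Then for τ = (det F)⁻¹ F⁻ᵀ τ̂ Fᵀ, one has (det F_F)²·tᵀ τ n = t̂ᵀ τ̂ n̂. -/
open scoped Matrix in
/-- Mapping of normal-tangential components under the covariant–Piola transformation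
`τ = (det F)⁻¹ F⁻ᵀ τ̂ Fᵀ` in 2D: with `n = (det F / det F_F) F⁻ᵀ n̂` and
`t = (det F_F)⁻¹ F t̂`, one has `(det F_F)² · tᵀ τ n = t̂ᵀ τ̂ n̂`. -/
theorem nt_covariantPiola_map (F τhat : Matrix (Fin 2) (Fin 2) ℝ)
    (hF : IsUnit F.det) (detFF : ℝ) (hFF : detFF ≠ 0)
    (nhat that : Fin 2 → ℝ)
    (n t : Fin 2 → ℝ)
    (hn : n = (F.det / detFF) • (F⁻¹.transpose).mulVec nhat)
    (ht : t = detFF⁻¹ • F.mulVec that)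
    (τ : Matrix (Fin 2) (Fin 2) ℝ)
    (hτ : τ = (F.det)⁻¹ • (F⁻¹.transpose * τhat * F.transpose)) :
    detFF ^ 2 * (t ⬝ᵥ τ.mulVec n) = that ⬝ᵥ τhat.mulVec nhat := by
  have hdet : F.det ≠ 0 := by
    rcases hF with ⟨u, hu⟩
    rw [← hu]; exact u.ne_zero
  have h1 : F⁻¹ * F = 1 := Matrix.nonsing_inv_mul F hF
  have h2 : F.transpose * F⁻¹.transpose = 1 := by
    rw [← Matrix.transpose_mul, h1, Matrix.transpose_one]
  subst hτ ht hn
  rw [Matrix.smul_mulVec, Matrix.mulVec_smul, Matrix.mulVec_mulVec,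
    mul_assoc (F⁻¹.transpose * τhat), h2, mul_one,
    show F.mulVec that = Matrix.vecMul that F.transpose by
      rw [Matrix.vecMul_transpose]]
  simp only [dotProduct_smul, smul_dotProduct, smul_eq_mul]
  rw [Matrix.dotProduct_mulVec, Matrix.vecMul_vecMul, ← Matrix.mul_assoc, h2, one_mul,
    ← Matrix.dotProduct_mulVec]
  field_simp
end

section
/- Let T be a simplex in ℝ², with barycentric coordinates λᵢ vanishing at the opposite face Fᵢ, and Sⁱ := dev(∇λ_{i+1} ⊗ curl(λ_{i+2})) (indices mod 3). Then the normal-tangential component of Sⁱ vanishes on every face Fⱼ with j ≠ i and is nonzero on Fᵢ; consequently {S⁰, S¹, S²} is a basis of the trace-free 2×2 matrices. -/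
/-- Deviatoric part of a `2 × 2` matrix. -/
noncomputable def dev2 (M : Matrix (Fin 2) (Fin 2) ℝ) : Matrix (Fin 2) (Fin 2) ℝ :=
  M - (Matrix.trace M / 2) • (1 : Matrix (Fin 2) (Fin 2) ℝ)

/-- Rotation by 90°: the `curl` of a scalar function with gradient `v` is `rot v`. -/
def rot (v : Fin 2 → ℝ) : Fin 2 → ℝ := ![-(v 1), v 0]

/-- Euclidean norm in `ℝ²`. -/
noncomputable def nrm2 (v : Fin 2 → ℝ) : ℝ := Real.sqrt ((v 0) ^ 2 + (v 1) ^ 2)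

private lemma nt_val (u v w : Fin 2 → ℝ) (k : ℝ) :
    dotProduct (rot (-(k • w)))
      ((dev2 (Matrix.vecMulVec u (rot v))).mulVec (-(k • w))) =
      k^2 * ((w 0 * u 1 - w 1 * u 0) * (v 0 * w 1 - v 1 * w 0)) := by
  simp [rot, dev2, Matrix.vecMulVec, Matrix.mulVec, dotProduct, Matrix.trace,
    Matrix.diag, Fin.sum_univ_two, Matrix.one_apply, Matrix.sub_apply, Matrix.smul_apply]
  ring

private lemma nrm2_inv_ne (v : Fin 2 → ℝ) (hv : v ≠ 0) : (nrm2 v)⁻¹ ≠ 0 := by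
  have hor : v 0 ≠ 0 ∨ v 1 ≠ 0 := by
    by_contra h
    push_neg at h
    exact hv (funext fun i => by fin_cases i <;> simp [h.1, h.2])
  have h : (v 0)^2 + (v 1)^2 > 0 := by
    rcases hor with h | h <;> positivity
  have := Real.sqrt_pos.mpr h
  rw [nrm2]
  exact inv_ne_zero (ne_of_gt this)

open scoped Matrix in
/-- Lemma 5.1 (`d = 2`).  Let `g i = ∇λᵢ` be the (constant) barycentric gradients of a
nondegenerate triangle (so `g 0 + g 1 + g 2 = 0` and `g 0, g 1` are linearly
independent), let `nⱼ = −gⱼ/‖gⱼ‖` be the outward unit normal of the face `Fⱼ`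
opposite vertex `j`, `tⱼ` its tangent, and set
`Sⁱ = dev(∇λ_{i+1} ⊗ curl λ_{i+2})` (indices mod 3).  Then the normal-tangential
component `tⱼᵀ Sⁱ nⱼ` vanishes iff `j ≠ i`, and `{S⁰, S¹, S²}` is a basis of the
trace-free `2 × 2` matrices. -/
theorem Si_nt_basis (g : Fin 3 → (Fin 2 → ℝ))
    (hsum : g 0 + g 1 + g 2 = 0)
    (hind : LinearIndependent ℝ ![g 0, g 1])
    (S : Fin 3 → Matrix (Fin 2) (Fin 2) ℝ)
    (hS : ∀ i, S i = dev2 (Matrix.vecMulVec (g (i + 1)) (rot (g (i + 2)))))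
    (n t : Fin 3 → (Fin 2 → ℝ))
    (hn : ∀ j, n j = -((nrm2 (g j))⁻¹ • g j))
    (ht : ∀ j, t j = rot (n j)) :
    (∀ i j, (t j ⬝ᵥ (S i).mulVec (n j) = 0 ↔ j ≠ i)) ∧
    LinearIndependent ℝ S ∧
    (∀ M : Matrix (Fin 2) (Fin 2) ℝ, Matrix.trace M = 0 →
      M ∈ Submodule.span ℝ (Set.range S)) := by
  have hpair := LinearIndependent.pair_iff.mp hind
  have hg2 : ∀ i, g 2 i = -(g 0 i + g 1 i) := by
    intro i
    have := congrFun hsum i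
    simp only [Pi.add_apply, Pi.zero_apply] at this
    linarith
  have e2 : g 2 0 = -(g 0 0 + g 1 0) := hg2 0
  have f2 : g 2 1 = -(g 0 1 + g 1 1) := hg2 1
  have hD : g 0 0 * g 1 1 - g 0 1 * g 1 0 ≠ 0 := by
    intro h
    have h1 : (g 1 1) • g 0 + (-(g 0 1)) • g 1 = 0 := by
      funext i
      fin_cases i
      · show g 1 1 * g 0 0 + -(g 0 1) * g 1 0 = 0
        linear_combination h
      · show g 1 1 * g 0 1 + -(g 0 1) * g 1 1 = 0
        ring
    obtain ⟨hd0, hb0⟩ := hpair _ _ h1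
    have h2 : (-(g 1 0)) • g 0 + (g 0 0) • g 1 = 0 := by
      funext i
      fin_cases i
      · show -(g 1 0) * g 0 0 + g 0 0 * g 1 0 = 0
        ring
      · show -(g 1 0) * g 0 1 + g 0 0 * g 1 1 = 0
        linear_combination h
    obtain ⟨hc0, ha0⟩ := hpair _ _ h2
    have hg00 : g 0 = 0 := by
      funext i
      fin_cases i
      · show g 0 0 = 0
        simpa using ha0
      · show g 0 1 = 0
        exact neg_eq_zero.mp hb0
    exact one_ne_zero (hpair 1 0 (by simp [hg00])).1
  have hgne : ∀ j, g j ≠ 0 := by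
    intro j hj
    fin_cases j
    · have h0 : g 0 = 0 := hj
      exact one_ne_zero (hpair 1 0 (by simp [h0])).1
    · have h1 : g 1 = 0 := hj
      exact one_ne_zero (hpair 0 1 (by simp [h1])).2
    · have h2 : g 2 = 0 := hj
      refine one_ne_zero (hpair 1 1 ?_).1
      funext i
      have h := hg2 i
      rw [h2] at h
      simp only [Pi.zero_apply] at h
      simp only [Pi.add_apply, Pi.smul_apply, smul_eq_mul, Pi.zero_apply, one_mul]
      linarith
  have hk : ∀ j, (nrm2 (g j))⁻¹ ≠ 0 := fun j => nrm2_inv_ne _ (hgne j)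
  have key : ∀ i j, t j ⬝ᵥ (S i).mulVec (n j) =
      ((nrm2 (g j))⁻¹)^2 * ((g j 0 * g (i+1) 1 - g j 1 * g (i+1) 0) *
        (g (i+2) 0 * g j 1 - g (i+2) 1 * g j 0)) := by
    intro i j
    rw [ht, hn, hS]
    exact nt_val _ _ _ _
  have part1 : ∀ i j, (t j ⬝ᵥ (S i).mulVec (n j) = 0 ↔ j ≠ i) := by
    intro i j
    rw [key]
    by_cases hij : j = i
    · subst hij
      simp only [ne_eq, not_true_eq_false, iff_false]
      have hval : (g j 0 * g (j+1) 1 - g j 1 * g (j+1) 0) *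
          (g (j+2) 0 * g j 1 - g (j+2) 1 * g j 0) =
          (g 0 0 * g 1 1 - g 0 1 * g 1 0) * (g 0 0 * g 1 1 - g 0 1 * g 1 0) := by
        fin_cases j
        · show (g 0 0 * g 1 1 - g 0 1 * g 1 0) * (g 2 0 * g 0 1 - g 2 1 * g 0 0) = _
          rw [e2, f2]; ring
        · show (g 1 0 * g 2 1 - g 1 1 * g 2 0) * (g 0 0 * g 1 1 - g 0 1 * g 1 0) = _
          rw [e2, f2]; ring
        · show (g 2 0 * g 0 1 - g 2 1 * g 0 0) * (g 1 0 * g 2 1 - g 1 1 * g 2 0) = _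
          rw [e2, f2]; ring
      rw [hval]
      exact mul_ne_zero (pow_ne_zero 2 (hk j)) (mul_ne_zero hD hD)
    · simp only [ne_eq, hij, not_false_eq_true, iff_true]
      have hcases : j = i + 1 ∨ j = i + 2 := by
        revert hij; revert i j; decide
      rcases hcases with h | h
      · subst h
        have hz : g (i+1) 0 * g (i+1) 1 - g (i+1) 1 * g (i+1) 0 = 0 := by ring
        rw [hz, zero_mul, mul_zero]
      · subst h
        have hz : g (i+2) 0 * g (i+2) 1 - g (i+2) 1 * g (i+2) 0 = 0 := by ring
        rw [hz, mul_zero, mul_zero]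
  have hli : LinearIndependent ℝ S := by
    rw [Fintype.linearIndependent_iff]
    intro co hco
    have hco' : ∀ jj : Fin 3, co 0 * (t jj ⬝ᵥ (S 0).mulVec (n jj)) +
        co 1 * (t jj ⬝ᵥ (S 1).mulVec (n jj)) +
        co 2 * (t jj ⬝ᵥ (S 2).mulVec (n jj)) = 0 := by
      intro jj
      have h0 := congrArg (fun M => t jj ⬝ᵥ M.mulVec (n jj)) hco
      simpa only [Fin.sum_univ_three, Matrix.add_mulVec, Matrix.smul_mulVec,
        dotProduct_add, dotProduct_smul, smul_eq_mul, Matrix.zero_mulVec,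
        dotProduct_zero] using h0
    have hc0 : co 0 = 0 := by
      have h := hco' 0
      rw [(part1 1 0).mpr (by decide), (part1 2 0).mpr (by decide)] at h
      have h' : co 0 * (t 0 ⬝ᵥ (S 0).mulVec (n 0)) = 0 := by linarith
      exact (mul_eq_zero.mp h').resolve_right (fun hz => ((part1 0 0).mp hz) rfl)
    have hc1 : co 1 = 0 := by
      have h := hco' 1
      rw [(part1 0 1).mpr (by decide), (part1 2 1).mpr (by decide)] at h
      have h' : co 1 * (t 1 ⬝ᵥ (S 1).mulVec (n 1)) = 0 := by linarith
      exact (mul_eq_zero.mp h').resolve_right (fun hz => ((part1 1 1).mp hz) rfl)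
    have hc2 : co 2 = 0 := by
      have h := hco' 2
      rw [(part1 0 2).mpr (by decide), (part1 1 2).mpr (by decide)] at h
      have h' : co 2 * (t 2 ⬝ᵥ (S 2).mulVec (n 2)) = 0 := by linarith
      exact (mul_eq_zero.mp h').resolve_right (fun hz => ((part1 2 2).mp hz) rfl)
    intro j
    fin_cases j
    · exact hc0
    · exact hc1
    · exact hc2
  refine ⟨part1, hli, ?_⟩
  -- spanning via dimension count
  have htr : ∀ i, Matrix.trace (S i) = 0 := by
    intro i
    rw [hS]
    simp [dev2, Matrix.trace, Matrix.diag, Fin.sum_univ_two, Matrix.vecMulVec, rot,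
      Matrix.sub_apply, Matrix.smul_apply, Matrix.one_apply]
    ring
  have hle : Submodule.span ℝ (Set.range S) ≤
      LinearMap.ker (Matrix.traceLinearMap (Fin 2) ℝ ℝ) := by
    rw [Submodule.span_le]
    rintro _ ⟨i, rfl⟩
    exact htr i
  have hrange : LinearMap.range (Matrix.traceLinearMap (Fin 2) ℝ ℝ) = ⊤ := by
    rw [LinearMap.range_eq_top]
    intro r
    exact ⟨r • Matrix.single 0 0 1, by simp [Matrix.traceLinearMap]⟩
  have hrank := LinearMap.finrank_range_add_finrank_ker (Matrix.traceLinearMap (Fin 2) ℝ ℝ)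
  rw [hrange] at hrank
  have hfintot : Module.finrank ℝ (Matrix (Fin 2) (Fin 2) ℝ) = 4 := by
    simp [Module.finrank_matrix]
  have h1 : Module.finrank ℝ (⊤ : Submodule ℝ ℝ) = 1 := by simp
  rw [h1, hfintot] at hrank
  have hKrank : Module.finrank ℝ
      (LinearMap.ker (Matrix.traceLinearMap (Fin 2) ℝ ℝ)) = 3 := by omega
  have hspanrank : Module.finrank ℝ (Submodule.span ℝ (Set.range S)) = 3 := by
    rw [finrank_span_eq_card hli]
    simp
  have heq : Submodule.span ℝ (Set.range S) =
      LinearMap.ker (Matrix.traceLinearMap (Fin 2) ℝ ℝ) :=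
    Submodule.eq_of_le_of_finrank_le hle (by rw [hKrank, hspanrank])
  intro M hM
  rw [heq]
  exact hM
end
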